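/- If R : Fin n → ℝ is generalized pairwise valid, then the mixed graph G_M(R) contains a strict matching forest, i.e. a matching forest F contained in G_M(R) with h_F(reg i) = 1 for every i : Fin n. -/

import Mathlib

open MeasureTheory ProbabilityTheory

/-- Shannon entropy (in nats) of a random variable. -/
noncomputable def shEntropy {Ω : Type*} [MeasurableSpace Ω] {S : Type*}
    (μ : Measure Ω) (X : Ω → S) : ℝ :=
  ∑' x : S, Real.negMulLog (μ (X ⁻¹' {x})).toReal

/-- Conditional Shannon entropy `H[X | Y]`. -/
noncomputable def shCondEntropy {Ω : Type*} [MeasurableSpace Ω] {S T : Type*}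
    (μ : Measure Ω) (X : Ω → S) (Y : Ω → T) : ℝ :=
  ∑' y : T, (μ (Y ⁻¹' {y})).toReal * shEntropy (ProbabilityTheory.cond μ (Y ⁻¹' {y})) X

/-- The power needed at node `i` (channel gain `γ i`) to support rate `r` (in nats). -/
noncomputable def Qpow {n : ℕ} (γ : Fin n → ℝ) (i : Fin n) (r : ℝ) : ℝ :=
  (Real.exp r - 1) / γ i

/-- The two-dimensional Slepian-Wolf region of the pair of sources `X i`, `X j`. -/
def SWregion {Ω S : Type*} [MeasurableSpace Ω] {n : ℕ}
    (μ : Measure Ω) (X : Fin n → Ω → S) (i j : Fin n) : Set (ℝ × ℝ) :=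
  {q : ℝ × ℝ | q.1 ≥ shCondEntropy μ (X i) (X j) ∧ q.2 ≥ shCondEntropy μ (X j) (X i) ∧
    q.1 + q.2 ≥ shEntropy μ (fun ω => (X i ω, X j ω))}

/-- The Slepian-Wolf region intersected with the peak power constraints. -/
def Sregion {Ω S : Type*} [MeasurableSpace Ω] {n : ℕ}
    (μ : Measure Ω) (X : Fin n → Ω → S) (γ : Fin n → ℝ) (Pmax : ℝ)
    (i j : Fin n) : Set (ℝ × ℝ) :=
  {q : ℝ × ℝ | q ∈ SWregion μ X i j ∧ Qpow γ i q.1 ≤ Pmax ∧ Qpow γ j q.2 ≤ Pmax}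

/-- `X i` is initially decodable under `R` if `R i ≥ H[X i]`, or together with some
other source `X j` the rate pair `(R i, R j)` lies in their Slepian-Wolf region. -/
def InitiallyDecodable {Ω S : Type*} [MeasurableSpace Ω] {n : ℕ}
    (μ : Measure Ω) (X : Fin n → Ω → S) (R : Fin n → ℝ) (i : Fin n) : Prop :=
  R i ≥ shEntropy μ (X i) ∨ ∃ j : Fin n, j ≠ i ∧ (R i, R j) ∈ SWregion μ X i j

/-- The generalized pairwise property: each source is initially decodable, or is
decodable via a chain of sources starting from an initially decodable one. -/
def GenPairwiseProperty {Ω S : Type*} [MeasurableSpace Ω] {n : ℕ}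
    (μ : Measure Ω) (X : Fin n → Ω → S) (R : Fin n → ℝ) : Prop :=
  ∀ i : Fin n, InitiallyDecodable μ X R i ∨
    ∃ (k : ℕ) (s : ℕ → Fin n), 1 ≤ k ∧
      InitiallyDecodable μ X R (s 1) ∧
      (∀ j : ℕ, 2 ≤ j → j ≤ k → R (s j) ≥ shCondEntropy μ (X (s j)) (X (s (j - 1)))) ∧
      R i ≥ shCondEntropy μ (X i) (X (s k))

/-- A rate assignment is generalized pairwise valid if it satisfies the generalized
pairwise property and every node meets the peak power constraint. -/
def GenPairwiseValid {Ω S : Type*} [MeasurableSpace Ω] {n : ℕ}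
    (μ : Measure Ω) (X : Fin n → Ω → S) (γ : Fin n → ℝ) (Pmax : ℝ)
    (R : Fin n → ℝ) : Prop :=
  GenPairwiseProperty μ X R ∧ ∀ i : Fin n, Qpow γ i (R i) ≤ Pmax

/-- A mixed graph on a vertex type `V`: a finite set `E` of undirected edges (with no
loops) and a finite set `A` of directed edges (with no self-loops). -/
structure MixedGraph (V : Type*) where
  E : Finset (Sym2 V)
  A : Finset (V × V)
  no_loops : ∀ e ∈ E, ¬ e.IsDiag
  no_diag : ∀ a ∈ A, a.1 ≠ a.2

/-- `headCount F i` is the number of edges of `F` of which `i` is a head: `i` is a head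
of an undirected edge iff it is one of its endpoints, and of a directed edge iff it is
its target. -/
def MixedGraph.headCount {V : Type*} [DecidableEq V] (F : MixedGraph V) (i : V) : ℕ :=
  (F.E.filter fun e => i ∈ e).card + (F.A.filter fun a => a.2 = i).card

/-- The underlying undirected graph of a mixed graph: `a ~ b` iff `a ≠ b` and the two
vertices are joined by an undirected edge or by a directed edge (in either direction). -/
def MixedGraph.UUG {V : Type*} (F : MixedGraph V) : SimpleGraph V :=
  SimpleGraph.fromRel fun a b => s(a, b) ∈ F.E ∨ (a, b) ∈ F.A

/-- A matching forest: every vertex is the head of at most one edge, no two distinct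
edges share the same underlying unordered vertex pair, and the underlying undirected
graph is acyclic. -/
def MixedGraph.IsMatchingForest {V : Type*} [DecidableEq V] (F : MixedGraph V) : Prop :=
  (∀ i : V, F.headCount i ≤ 1) ∧
  (∀ a b : V, ¬((a, b) ∈ F.A ∧ (b, a) ∈ F.A)) ∧
  (∀ a b : V, s(a, b) ∈ F.E → (a, b) ∉ F.A ∧ (b, a) ∉ F.A) ∧
  F.UUG.IsAcyclic

/-- `F` is a sub-mixed-graph of `G`. -/
def MixedGraph.IsSubgraph {V : Type*} (F G : MixedGraph V) : Prop :=
  F.E ⊆ G.E ∧ F.A ⊆ G.A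

open scoped Classical in
/-- The generalized pairwise property test graph `G_M(R)`: regular vertices `Sum.inl i`
and starred vertices `Sum.inr i`; a directed edge `(star i, reg i)` whenever
`R i ≥ H[X i]`; a directed edge `(reg j, reg i)` (for `j ≠ i`) whenever
`R i ≥ H[X i | X j]`; and an undirected edge `s(reg i, reg j)` (for `i ≠ j`) whenever
`(R i, R j)` lies in the Slepian-Wolf region of the pair. -/
noncomputable def GMgraph {Ω S : Type*} [MeasurableSpace Ω] {n : ℕ}
    (μ : MeasureTheory.Measure Ω) (X : Fin n → Ω → S) (R : Fin n → ℝ) :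
    MixedGraph (Fin n ⊕ Fin n) where
  E := Finset.univ.filter fun e => ∃ i j : Fin n, i ≠ j ∧
    e = s(Sum.inl i, Sum.inl j) ∧ (R i, R j) ∈ SWregion μ X i j
  A := Finset.univ.filter fun a =>
    (∃ i : Fin n, a = (Sum.inr i, Sum.inl i) ∧ R i ≥ shEntropy μ (X i)) ∨
    (∃ i j : Fin n, j ≠ i ∧ a = (Sum.inl j, Sum.inl i) ∧
      R i ≥ shCondEntropy μ (X i) (X j))
  no_loops := by
    intro e he
    simp only [Finset.mem_filter] at he
    obtain ⟨-, i, j, hij, rfl, -⟩ := he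
    simp only [Sym2.mk_isDiag_iff, Sum.inl.injEq]
    exact hij
  no_diag := by
    intro a ha
    simp only [Finset.mem_filter] at ha
    rcases ha.2 with ⟨i, rfl, -⟩ | ⟨i, j, hij, rfl, -⟩
    · simp
    · simp only [ne_eq, Sum.inl.injEq]
      exact hij

/-! The forest is read off a parent map `p` on the vertices of `G_M(R)`: a source with
`R i ≥ H[X i]` hangs from its starred copy, one with a Slepian-Wolf partner hangs from its least
partner, and any other source hangs from a source of smaller decoding rank given which it is
decodable. Joining every vertex to its parent, by an undirected edge when two vertices are each
other's parent and by an arc otherwise, makes each regular vertex the head of exactly one edge.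
The underlying graph is acyclic because a potential strictly decreases along `p` outside mutual
pairs, so a vertex of maximal potential on a cycle would have both cycle-neighbours equal to its
parent. -/

theorem SimpleGraph.isAcyclic_of_adj_parent {V α : Type*} [LinearOrder α] {G : SimpleGraph V}
    (p : V → V) (ρ : V → α) (hadj : ∀ a b, G.Adj a b → p a = b ∨ p b = a)
    (hρ : ∀ v, p (p v) ≠ v → ρ (p v) < ρ v) : G.IsAcyclic := by
  classical
  intro v c hc
  obtain ⟨u, hu, hmax⟩ := c.support.toFinset.exists_max_image ρ ⟨v, by simp⟩
  rw [List.mem_toFinset] at hu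
  let c' := c.rotate u hu
  have hc' : c'.IsCycle := hc.rotate hu
  have hparent : ∀ w ∈ c'.support, G.Adj u w → p u = w := by
    intro w hw huw
    rcases hadj u w huw with h | hwu
    · exact h
    by_contra hne
    have hlt : ρ u < ρ w := hwu ▸ hρ w (by rwa [hwu])
    exact (hmax w (by simpa [c', Walk.mem_support_rotate_iff] using hw)).not_gt hlt
  have hnil : ¬ c'.Nil := hc'.not_nil
  exact hc'.snd_ne_penultimate <|
    (hparent _ (c'.getVert_mem_support _) (c'.adj_snd hnil)).symm.trans
      (hparent _ (c'.getVert_mem_support _) (c'.adj_penultimate hnil).symm)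

namespace MixedGraph

variable {V : Type*} [Fintype V] [DecidableEq V] (p : V → V)

def ofParent : MixedGraph V where
  E := (Finset.univ.filter fun v => p v ≠ v ∧ p (p v) = v).image fun v => s(v, p v)
  A := (Finset.univ.filter fun v => p v ≠ v ∧ p (p v) ≠ v).image fun v => (p v, v)
  no_loops := by
    simp only [Finset.mem_image, Finset.mem_filter, Finset.mem_univ, true_and]
    rintro _ ⟨v, ⟨hv, -⟩, rfl⟩
    simpa [eq_comm] using hv
  no_diag := by
    simp only [Finset.mem_image, Finset.mem_filter, Finset.mem_univ, true_and]
    rintro _ ⟨v, ⟨hv, -⟩, rfl⟩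
    exact hv

variable {p}

theorem mk_mem_ofParent_E {a b : V} :
    s(a, b) ∈ (ofParent p).E ↔ a ≠ b ∧ p a = b ∧ p b = a := by
  simp only [ofParent, Finset.mem_image, Finset.mem_filter, Finset.mem_univ, true_and,
    Sym2.eq_iff]
  grind

theorem mk_mem_ofParent_A {a b : V} :
    (a, b) ∈ (ofParent p).A ↔ p b = a ∧ a ≠ b ∧ p a ≠ b := by
  simp only [ofParent, Finset.mem_image, Finset.mem_filter, Finset.mem_univ, true_and,
    Prod.mk.injEq]
  grind

theorem headCount_ofParent (v : V) : (ofParent p).headCount v = if p v = v then 0 else 1 := by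
  have hE : (ofParent p).E.filter (v ∈ ·) =
      if p (p v) = v ∧ p v ≠ v then {s(v, p v)} else ∅ := by
    ext e
    induction e using Sym2.ind with | _ a b => ?_
    split_ifs <;> simp [mk_mem_ofParent_E] <;> grind
  have hA : (ofParent p).A.filter (·.2 = v) =
      if p (p v) ≠ v ∧ p v ≠ v then {(p v, v)} else ∅ := by
    ext ⟨a, b⟩
    split_ifs <;> simp [mk_mem_ofParent_A] <;> grind
  rw [headCount, hE, hA]
  split_ifs <;> simp_all

theorem ofParent_uug_adj {a b : V} :
    (ofParent p).UUG.Adj a b ↔ a ≠ b ∧ (p a = b ∨ p b = a) := by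
  simp only [UUG, SimpleGraph.fromRel_adj, mk_mem_ofParent_A, mk_mem_ofParent_E]
  grind

theorem isSubgraph_ofParent {G : MixedGraph V}
    (hE : ∀ v, p v ≠ v → p (p v) = v → s(v, p v) ∈ G.E)
    (hA : ∀ v, p v ≠ v → p (p v) ≠ v → (p v, v) ∈ G.A) : (ofParent p).IsSubgraph G := by
  simp only [IsSubgraph, ofParent, Finset.subset_iff, Finset.mem_image, Finset.mem_filter,
    Finset.mem_univ, true_and]
  constructor
  · rintro _ ⟨v, ⟨hv, hpp⟩, rfl⟩
    exact hE v hv hpp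
  · rintro _ ⟨v, ⟨hv, hpp⟩, rfl⟩
    exact hA v hv hpp

theorem isMatchingForest_ofParent {α : Type*} [LinearOrder α] (ρ : V → α)
    (hρ : ∀ v, p (p v) ≠ v → ρ (p v) < ρ v) : (ofParent p).IsMatchingForest := by
  refine ⟨fun v => ?_, fun a b => ?_, fun a b => ?_, ?_⟩
  · rw [headCount_ofParent]
    split_ifs <;> omega
  · simp only [mk_mem_ofParent_A]
    grind
  · simp only [mk_mem_ofParent_E, mk_mem_ofParent_A]
    grind
  · exact SimpleGraph.isAcyclic_of_adj_parent p ρ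
      (fun a b h => (ofParent_uug_adj.1 h).2) hρ

end MixedGraph

section Decoding

variable {Ω S : Type*} [MeasurableSpace Ω] (μ : Measure Ω)

theorem shEntropy_equiv_comp {T U : Type*} (e : T ≃ U) (Y : Ω → T) :
    shEntropy μ (e ∘ Y) = shEntropy μ Y := by
  unfold shEntropy
  rw [← e.tsum_eq]
  congr! with x
  ext ω
  simp

variable {n : ℕ} {X : Fin n → Ω → S}

theorem SWregion_swap {i j : Fin n} {a b : ℝ} (h : (a, b) ∈ SWregion μ X i j) :
    (b, a) ∈ SWregion μ X j i := by
  obtain ⟨hi, hj, hij⟩ := h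
  have hswap :
      shEntropy μ (fun ω => (X j ω, X i ω)) = shEntropy μ (fun ω => (X i ω, X j ω)) :=
    shEntropy_equiv_comp μ (Equiv.prodComm S S) (fun ω => (X i ω, X j ω))
  refine ⟨hj, hi, ?_⟩
  simp only at hij ⊢
  linarith

variable (X) (R : Fin n → ℝ)

def ChainDecodable : ℕ → Fin n → Prop
  | 0, i => InitiallyDecodable μ X R i
  | m + 1, i => ∃ j, ChainDecodable m j ∧ R i ≥ shCondEntropy μ (X i) (X j)

variable {μ X R}

theorem GenPairwiseProperty.exists_chainDecodable (h : GenPairwiseProperty μ X R) (i : Fin n) :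
    ∃ m, ChainDecodable μ X R m i := by
  rcases h i with hi | ⟨k, s, hk, hs₁, hs, hi⟩
  · exact ⟨0, hi⟩
  have hchain : ∀ j, 1 ≤ j → j ≤ k → ChainDecodable μ X R (j - 1) (s j) := by
    refine Nat.le_induction (fun _ => hs₁) fun j hj ih hjk => ?_
    obtain ⟨j', rfl⟩ := Nat.exists_eq_add_of_le' hj
    exact ⟨s (j' + 1), ih (by omega), hs (j' + 1 + 1) (by omega) hjk⟩
  obtain ⟨k', rfl⟩ := Nat.exists_eq_add_of_le' hk
  exact ⟨k' + 1, s (k' + 1), hchain (k' + 1) (by omega) le_rfl, hi⟩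

variable (μ X R) in
def IsDecodingOrder (rank : Fin n → ℕ) (parent : Fin n → Fin n) : Prop :=
  ∀ i, ¬ InitiallyDecodable μ X R i →
    rank (parent i) < rank i ∧ R i ≥ shCondEntropy μ (X i) (X (parent i))

theorem GenPairwiseProperty.exists_decodingOrder (h : GenPairwiseProperty μ X R) :
    ∃ rank parent, IsDecodingOrder μ X R rank parent := by
  classical
  let rank i := Nat.find (h.exists_chainDecodable i)
  have hparent : ∀ i, ∃ j, ¬ InitiallyDecodable μ X R i →
      rank j < rank i ∧ R i ≥ shCondEntropy μ (X i) (X j) := by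
    intro i
    by_cases hi : InitiallyDecodable μ X R i
    · exact ⟨i, absurd hi⟩
    have hspec : ChainDecodable μ X R (rank i) i := Nat.find_spec (h.exists_chainDecodable i)
    obtain ⟨m, hm⟩ : ∃ m, rank i = m + 1 :=
      Nat.exists_eq_succ_of_ne_zero fun h0 => hi (by rwa [h0] at hspec)
    rw [hm] at hspec
    obtain ⟨j, hj, hRj⟩ := hspec
    exact ⟨j, fun _ => ⟨(Nat.find_min' _ hj).trans_lt (by omega), hRj⟩⟩
  choose parent hparent using hparent
  exact ⟨rank, parent, hparent⟩

variable (μ X R)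

open scoped Classical in
noncomputable def swPartners (i : Fin n) : Finset (Fin n) :=
  Finset.univ.filter fun j => j ≠ i ∧ (R i, R j) ∈ SWregion μ X i j

noncomputable def swPartner (i : Fin n) : Fin n :=
  if h : (swPartners μ X R i).Nonempty then (swPartners μ X R i).min' h else i

variable {μ X R}

theorem mem_swPartners {i j : Fin n} :
    j ∈ swPartners μ X R i ↔ j ≠ i ∧ (R i, R j) ∈ SWregion μ X i j := by
  simp [swPartners]

theorem mem_swPartners_comm {i j : Fin n} :
    j ∈ swPartners μ X R i ↔ i ∈ swPartners μ X R j := by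
  simp only [mem_swPartners]
  exact ⟨fun h => ⟨h.1.symm, SWregion_swap μ h.2⟩,
    fun h => ⟨h.1.symm, SWregion_swap μ h.2⟩⟩

theorem swPartner_mem {i : Fin n} (h : (swPartners μ X R i).Nonempty) :
    swPartner μ X R i ∈ swPartners μ X R i := by
  rw [swPartner, dif_pos h]
  exact Finset.min'_mem _ _

theorem swPartner_le {i j : Fin n} (h : j ∈ swPartners μ X R i) : swPartner μ X R i ≤ j := by
  rw [swPartner, dif_pos ⟨j, h⟩]
  exact Finset.min'_le _ _ h

theorem initiallyDecodable_iff {i : Fin n} : InitiallyDecodable μ X R i ↔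
    R i ≥ shEntropy μ (X i) ∨ (swPartners μ X R i).Nonempty := by
  simp [InitiallyDecodable, Finset.Nonempty, mem_swPartners]

end Decoding

open MixedGraph

section StrictMatchingForest

variable {Ω S : Type*} [MeasurableSpace Ω] (μ : Measure Ω) {n : ℕ} (X : Fin n → Ω → S)
  (R : Fin n → ℝ)

open scoped Classical in
noncomputable def gmParent (parent : Fin n → Fin n) : Fin n ⊕ Fin n → Fin n ⊕ Fin n
  | .inl i =>
    if R i ≥ shEntropy μ (X i) then .inr i
    else if (swPartners μ X R i).Nonempty then .inl (swPartner μ X R i)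
    else .inl (parent i)
  | .inr i => .inr i

open scoped Classical in
/-- Along a chain of Slepian-Wolf partners that is not a mutual pair, `i + swPartner i`
decreases, since `swPartner` picks the least partner of a symmetric relation. -/
noncomputable def gmPotential (rank : Fin n → ℕ) : Fin n ⊕ Fin n → ℕ
  | .inl i =>
    if R i ≥ shEntropy μ (X i) then 1
    else if (swPartners μ X R i).Nonempty then i + swPartner μ X R i + 2
    else 2 * n + 1 + rank i
  | .inr _ => 0

variable {μ X R} {rank : Fin n → ℕ} {parent : Fin n → Fin n}

@[simp]
theorem gmParent_inr (i : Fin n) : gmParent μ X R parent (.inr i) = .inr i := rfl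

theorem gmParent_inl_of_not_initiallyDecodable {i : Fin n}
    (hi : ¬ InitiallyDecodable μ X R i) : gmParent μ X R parent (.inl i) = .inl (parent i) := by
  rw [initiallyDecodable_iff, not_or] at hi
  simp [gmParent, hi.1, hi.2]

theorem gmParent_inl_eq_inr {i k : Fin n} :
    gmParent μ X R parent (.inl i) = .inr k ↔ i = k ∧ R i ≥ shEntropy μ (X i) := by
  simp only [gmParent]
  split_ifs with hA <;> simp [hA]

theorem ne_and_le_of_gmParent_inl_eq (hord : IsDecodingOrder μ X R rank parent)
    {i j : Fin n} (h : gmParent μ X R parent (.inl i) = .inl j) :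
    j ≠ i ∧ R i ≥ shCondEntropy μ (X i) (X j) := by
  simp only [gmParent] at h
  split_ifs at h with hA hP <;> obtain rfl := Sum.inl.inj h
  · obtain ⟨hne, hSW⟩ := mem_swPartners.1 (swPartner_mem hP)
    exact ⟨hne, hSW.1⟩
  · obtain ⟨hlt, hR⟩ := hord i (by rw [initiallyDecodable_iff]; tauto)
    exact ⟨fun h' => by rw [h'] at hlt; omega, hR⟩

theorem gmParent_inl_ne (hord : IsDecodingOrder μ X R rank parent) (i : Fin n) :
    gmParent μ X R parent (.inl i) ≠ .inl i :=
  fun h => (ne_and_le_of_gmParent_inl_eq hord h).1 rfl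

theorem gmParent_mutual_mem_SWregion (hord : IsDecodingOrder μ X R rank parent) {i j : Fin n}
    (hij : gmParent μ X R parent (.inl i) = .inl j)
    (hji : gmParent μ X R parent (.inl j) = .inl i) : (R i, R j) ∈ SWregion μ X i j := by
  simp only [gmParent] at hij
  split_ifs at hij with hAi hPi <;> obtain rfl := Sum.inl.inj hij
  · exact (mem_swPartners.1 (swPartner_mem hPi)).2
  have hDi : ¬ InitiallyDecodable μ X R i := by rw [initiallyDecodable_iff]; tauto
  simp only [gmParent] at hji
  split_ifs at hji with hAj hPj <;> have hji := Sum.inl.inj hji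
  · exact absurd ⟨_, mem_swPartners_comm.1 (hji ▸ swPartner_mem hPj)⟩ hPi
  · have hDj : ¬ InitiallyDecodable μ X R (parent i) := by rw [initiallyDecodable_iff]; tauto
    have := (hord i hDi).1
    have := hji ▸ (hord _ hDj).1
    omega

theorem gmPotential_inl_of_not_initiallyDecodable {i : Fin n}
    (hi : ¬ InitiallyDecodable μ X R i) :
    gmPotential μ X R rank (.inl i) = 2 * n + 1 + rank i := by
  rw [initiallyDecodable_iff, not_or] at hi
  simp [gmPotential, hi.1, hi.2]

theorem gmPotential_inl_le_of_initiallyDecodable {i : Fin n}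
    (hi : InitiallyDecodable μ X R i) : gmPotential μ X R rank (.inl i) ≤ 2 * n := by
  have := (swPartner μ X R i).isLt
  simp only [gmPotential]
  split_ifs with hA hP
  · omega
  · omega
  · rw [initiallyDecodable_iff] at hi
    tauto

theorem gmPotential_gmParent_lt (hord : IsDecodingOrder μ X R rank parent)
    (v : Fin n ⊕ Fin n) (hv : gmParent μ X R parent (gmParent μ X R parent v) ≠ v) :
    gmPotential μ X R rank (gmParent μ X R parent v) < gmPotential μ X R rank v := by
  obtain i | i := v
  · by_cases hD : ¬ InitiallyDecodable μ X R i
    · have hlt := (hord i hD).1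
      rw [gmParent_inl_of_not_initiallyDecodable hD, gmPotential_inl_of_not_initiallyDecodable hD]
      by_cases hDp : InitiallyDecodable μ X R (parent i)
      · have := gmPotential_inl_le_of_initiallyDecodable (rank := rank) hDp
        omega
      · rw [gmPotential_inl_of_not_initiallyDecodable hDp]
        omega
    rw [not_not] at hD
    by_cases hA : R i ≥ shEntropy μ (X i)
    · simp [gmParent, gmPotential, hA]
    have hP : (swPartners μ X R i).Nonempty := by simpa [initiallyDecodable_iff, hA] using hD
    have hi : i ∈ swPartners μ X R (swPartner μ X R i) :=
      mem_swPartners_comm.1 (swPartner_mem hP)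
    have hPj : (swPartners μ X R (swPartner μ X R i)).Nonempty := ⟨i, hi⟩
    simp only [gmParent, if_neg hA, if_pos hP] at hv ⊢
    simp only [gmPotential, if_neg hA, if_pos hP, if_pos hPj]
    split_ifs at hv ⊢ with hAj
    · omega
    · have hlt : swPartner μ X R (swPartner μ X R i) < i :=
        (swPartner_le hi).lt_of_ne fun h => hv (by rw [h])
      rw [Fin.lt_def] at hlt
      omega
  · simp at hv

theorem ofParent_gmParent_isSubgraph (hord : IsDecodingOrder μ X R rank parent) :
    (ofParent (gmParent μ X R parent)).IsSubgraph (GMgraph μ X R) := by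
  refine isSubgraph_ofParent (fun v hv hpp => ?_) (fun v hv hpp => ?_) <;>
    obtain i | i := v <;> try exact (hv rfl).elim
  all_goals simp only [GMgraph, Finset.mem_filter, Finset.mem_univ, true_and]
  · obtain ⟨j, hj⟩ : ∃ j, gmParent μ X R parent (.inl i) = .inl j := by
      cases hp : gmParent μ X R parent (.inl i) with
      | inl j => exact ⟨j, rfl⟩
      | inr k => simp [hp] at hpp
    rw [hj] at hpp ⊢
    exact ⟨i, j, (ne_and_le_of_gmParent_inl_eq hord hj).1.symm, rfl,
      gmParent_mutual_mem_SWregion hord hj hpp⟩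
  · cases hp : gmParent μ X R parent (.inl i) with
    | inr k =>
      obtain ⟨rfl, hA⟩ := gmParent_inl_eq_inr.1 hp
      exact Or.inl ⟨i, rfl, hA⟩
    | inl j =>
      obtain ⟨hji, hR⟩ := ne_and_le_of_gmParent_inl_eq hord hp
      exact Or.inr ⟨i, j, hji, rfl, hR⟩

end StrictMatchingForest

theorem genPairwiseValid_exists_strictMatchingForest_general
    {Ω S : Type*} [MeasurableSpace Ω]
    (μ : MeasureTheory.Measure Ω)
    {n : ℕ}
    (X : Fin n → Ω → S)
    (γ : Fin n → ℝ) (Pmax : ℝ)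
    (R : Fin n → ℝ) (hR : GenPairwiseValid μ X γ Pmax R) :
    ∃ F : MixedGraph (Fin n ⊕ Fin n), F.IsSubgraph (GMgraph μ X R) ∧
      F.IsMatchingForest ∧ ∀ i : Fin n, F.headCount (Sum.inl i) = 1 := by
  obtain ⟨rank, parent, hord⟩ := hR.1.exists_decodingOrder
  refine ⟨ofParent (gmParent μ X R parent), ofParent_gmParent_isSubgraph hord,
    isMatchingForest_ofParent (gmPotential μ X R rank) (gmPotential_gmParent_lt hord),
    fun i => ?_⟩
  rw [headCount_ofParent, if_neg (gmParent_inl_ne hord i)]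

/-- If `R` is generalized pairwise valid, then `G_M(R)` contains a strict matching
forest: a matching forest in which every regular vertex is the head of exactly one
edge. -/
theorem genPairwiseValid_exists_strictMatchingForest
    {Ω S : Type*} [MeasurableSpace Ω] [MeasurableSpace S] [MeasurableSingletonClass S]
    (μ : MeasureTheory.Measure Ω) [MeasureTheory.IsProbabilityMeasure μ]
    {n : ℕ} (hn : 1 ≤ n)
    (X : Fin n → Ω → S) (hX : ∀ i, Measurable (X i))
    (hfin : ∀ i, (Set.range (X i)).Finite)
    (γ : Fin n → ℝ) (hγ : ∀ i, 0 < γ i) (Pmax : ℝ) (hP : 0 < Pmax)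
    (R : Fin n → ℝ) (hR : GenPairwiseValid μ X γ Pmax R) :
    ∃ F : MixedGraph (Fin n ⊕ Fin n), F.IsSubgraph (GMgraph μ X R) ∧
      F.IsMatchingForest ∧ ∀ i : Fin n, F.headCount (Sum.inl i) = 1 :=
  genPairwiseValid_exists_strictMatchingForest_general μ X γ Pmax R hR
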